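/- Gauss' measure γ (density (1/log 2)/(x+1) on [0,1]) is invariant under the map σ₂ defined by σ₂(x) = 2x for 0 ≤ x ≤ 1/2 and σ₂(x) = 1/x - 1 for 1/2 ≤ x ≤ 1. -/

import Mathlib

open MeasureTheory

/-- σ₂(x) = 2x for x ≤ 1/2, 1/x - 1 for x ≥ 1/2. -/
noncomputable def sigma2 (x : ℝ) : ℝ := if x ≤ 1 / 2 then 2 * x else 1 / x - 1

/-- Gauss' measure on [0,1]: dγ(x) = (1/log 2) dx/(x+1). -/
noncomputable def gaussMeasure : Measure ℝ :=
  (volume.restrict (Set.Icc (0:ℝ) 1)).withDensity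
    (fun x => ENNReal.ofReal ((Real.log 2)⁻¹ / (x + 1)))

open scoped ENNReal in
/-- 1D change of variables for lintegrals. -/
lemma lintegral_image_1d {s : Set ℝ} {f f' : ℝ → ℝ} (hs : MeasurableSet s)
    (hf' : ∀ x ∈ s, HasDerivWithinAt f (f' x) s x) (hf : Set.InjOn f s) (g : ℝ → ℝ≥0∞) :
    ∫⁻ x in f '' s, g x = ∫⁻ x in s, ENNReal.ofReal |f' x| * g (f x) := by
  simpa only [ContinuousLinearMap.det_toSpanSingleton] using
    lintegral_image_eq_lintegral_abs_det_fderiv_mul volume hs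
      (fun x hx => (hf' x hx).hasFDerivWithinAt) hf g

theorem gaussMeasure_sigma2_invariant (E : Set ℝ) (hE : MeasurableSet E)
    (hE1 : E ⊆ Set.Icc (0:ℝ) 1) :
    gaussMeasure (sigma2 ⁻¹' E) = gaussMeasure E := by
  have hc : (0:ℝ) ≤ (Real.log 2)⁻¹ := inv_nonneg.2 (Real.log_nonneg one_le_two)
  have hσ : Measurable sigma2 := by
    unfold sigma2
    exact Measurable.ite (measurableSet_le measurable_id measurable_const)
      (measurable_id.const_mul 2)
      ((measurable_const.div measurable_id).sub measurable_const)
  set f : ℝ → ENNReal := fun x => ENNReal.ofReal ((Real.log 2)⁻¹ / (x + 1)) with hfdef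
  have happ : ∀ S : Set ℝ, MeasurableSet S →
      gaussMeasure S = ∫⁻ x in S ∩ Set.Icc 0 1, f x := by
    intro S hS
    rw [gaussMeasure, withDensity_apply _ hS, Measure.restrict_restrict hS]
  set A : Set ℝ := (fun x : ℝ => 2 * x) ⁻¹' E ∩ Set.Icc 0 (1/2) with hAdef
  set B : Set ℝ := (fun x : ℝ => 1 / x - 1) ⁻¹' E ∩ Set.Ioc (1/2) 1 with hBdef
  have hAm : MeasurableSet A := ((measurable_id.const_mul 2) hE).inter measurableSet_Icc
  have hBm : MeasurableSet B :=
    (((measurable_const.div measurable_id).sub measurable_const) hE).inter measurableSet_Ioc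
  have hP : sigma2 ⁻¹' E ∩ Set.Icc 0 1 = A ∪ B := by
    ext x
    simp only [hAdef, hBdef, Set.mem_inter_iff, Set.mem_union, Set.mem_preimage, Set.mem_Icc,
      Set.mem_Ioc, sigma2]
    constructor
    · rintro ⟨hxE, hx0, hx1⟩
      by_cases h : x ≤ 1/2
      · left; rw [if_pos h] at hxE; exact ⟨hxE, hx0, h⟩
      · right; rw [if_neg h] at hxE; exact ⟨hxE, lt_of_not_ge h, hx1⟩
    · rintro (⟨h1, h2, h3⟩ | ⟨h1, h2, h3⟩)
      · exact ⟨by rw [if_pos h3]; exact h1, h2, h3.trans (by norm_num)⟩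
      · exact ⟨by rw [if_neg (not_le.2 h2)]; exact h1,
          le_of_lt (lt_trans (by norm_num) h2), h3⟩
  have hdisj : Disjoint A B := by
    refine Set.disjoint_left.2 ?_
    rintro x ⟨-, hx⟩ ⟨-, hx'⟩
    exact absurd hx.2 (not_le.2 hx'.1)
  -- first change of variables
  have himg1 : (fun x : ℝ => 2 * x) '' A = E := by
    ext y
    constructor
    · rintro ⟨x, ⟨hxE, -⟩, rfl⟩; exact hxE
    · intro hy
      obtain ⟨hy0, hy1⟩ := hE1 hy
      refine ⟨y/2, ⟨?_, ?_, ?_⟩, by ring⟩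
      · show 2 * (y/2) ∈ E; rw [show 2 * (y/2) = y by ring]; exact hy
      · linarith
      · linarith
  have h1 : ∫⁻ y in E, ENNReal.ofReal ((Real.log 2)⁻¹ / (y + 2)) = ∫⁻ x in A, f x := by
    rw [← himg1,
      lintegral_image_1d (f' := fun _ => (2:ℝ)) hAm
        (fun x _ => by simpa using ((hasDerivAt_id x).const_mul 2).hasDerivWithinAt)
        (fun a _ b _ h => mul_left_cancel₀ two_ne_zero h)]
    refine setLIntegral_congr_fun hAm (fun x hx => ?_)
    obtain ⟨-, hx0, -⟩ := hx
    rw [← ENNReal.ofReal_mul (abs_nonneg _)]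
    congr 1
    rw [abs_of_nonneg (by norm_num : (0:ℝ) ≤ 2)]
    have hx1 : x + 1 ≠ 0 := by linarith
    field_simp
  -- second change of variables
  have himg2 : (fun x : ℝ => 1 / x - 1) '' B = E \ {1} := by
    ext y
    constructor
    · rintro ⟨x, ⟨hxE, hxl, hxr⟩, rfl⟩
      refine ⟨hxE, ?_⟩
      have hx0 : (0:ℝ) < x := by linarith
      have : 1 / x < 2 := by rw [div_lt_iff₀ hx0]; linarith
      simp only [Set.mem_singleton_iff]
      intro h
      linarith
    · rintro ⟨hy, hy1⟩
      obtain ⟨hy0, hyle⟩ := hE1 hy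
      have hylt : y < 1 := lt_of_le_of_ne hyle (by simpa using hy1)
      have hy1pos : (0:ℝ) < y + 1 := by linarith
      refine ⟨1/(y+1), ⟨?_, ?_, ?_⟩, ?_⟩
      · show 1 / (1/(y+1)) - 1 ∈ E
        rw [one_div_one_div]
        simpa using hy
      · rw [lt_div_iff₀ hy1pos]; linarith
      · rw [div_le_one hy1pos]; linarith
      · show 1 / (1/(y+1)) - 1 = y
        rw [one_div_one_div]; ring
  have hdiffae : (E \ {1} : Set ℝ) =ᵐ[volume] E :=
    diff_ae_eq_self.2 (measure_mono_null Set.inter_subset_right (measure_singleton 1))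
  have h2 : ∫⁻ y in E, ENNReal.ofReal ((Real.log 2)⁻¹ / ((y + 1) * (y + 2)))
      = ∫⁻ x in B, f x := by
    rw [← Measure.restrict_congr_set hdiffae, ← himg2,
      lintegral_image_1d (f' := fun x => -(x^2)⁻¹) hBm
        (fun x hx => by
          have hx0 : x ≠ 0 := by
            obtain ⟨-, hxl, -⟩ := hx
            intro h; rw [h] at hxl; norm_num at hxl
          simpa [one_div] using ((hasDerivAt_inv hx0).sub_const 1).hasDerivWithinAt)
        (fun a ha b hb h => by
          have ha0 : a ≠ 0 := by obtain ⟨-, h', -⟩ := ha; intro hh; rw [hh] at h'; norm_num at h'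
          have hb0 : b ≠ 0 := by obtain ⟨-, h', -⟩ := hb; intro hh; rw [hh] at h'; norm_num at h'
          have : 1 / a = 1 / b := by linarith
          rw [one_div, one_div] at this
          exact inv_injective this)]
    refine setLIntegral_congr_fun hBm (fun x hx => ?_)
    obtain ⟨-, hxl, -⟩ := hx
    have hx0 : (0:ℝ) < x := by linarith
    have hx0' : x ≠ 0 := ne_of_gt hx0
    have hx1 : x + 1 ≠ 0 := by linarith
    rw [← ENNReal.ofReal_mul (abs_nonneg _)]
    congr 1
    rw [abs_of_nonpos (neg_nonpos.2 (by positivity)), neg_neg,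
      show 1/x - 1 + 1 = 1/x by ring, show 1/x - 1 + 2 = 1/x + 1 by ring]
    field_simp
    ring
  -- put everything together
  rw [happ _ (hσ hE), happ _ hE, Set.inter_eq_left.2 hE1, hP, lintegral_union hBm hdisj,
    ← h1, ← h2, ← lintegral_add_left (f := fun y : ℝ => ENNReal.ofReal ((Real.log 2)⁻¹ / (y + 2))) (by fun_prop)]
  refine setLIntegral_congr_fun hE (fun y hy => ?_)
  obtain ⟨hy0, -⟩ := hE1 hy
  rw [hfdef]
  dsimp only
  rw [← ENNReal.ofReal_add (by positivity) (by positivity)]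
  congr 1
  have hy1ne : y + 1 ≠ 0 := by positivity
  have hy2ne : y + 2 ≠ 0 := by positivity
  field_simp
  ring
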